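/- Let α > −1, α + β > −1/2, δ ∈ ℝ and 1 < p < ∞, and let S be any of the maximal operators V_{*,1}^{α,β}, V_{*,2}^{α,β}, Ṽ_{*,2}^{α,β}. If S is well defined and bounded on L^p(x^δ dx), i.e. S f(x) < ∞ for almost every x > 0 for every nonnegative f ∈ L^p(x^δ dx) and there is a constant C with ‖Sf‖_{L^p(x^δ dx)} ≤ C‖f‖_{L^p(x^δ dx)} for all nonnegative f ∈ L^p(x^δ dx), then necessarily δ < (2α+2)p − 1 and −1 < δ. -/

import Mathlib

open MeasureTheory Set Filter
open scoped ENNReal NNReal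

noncomputable def V1 (a b t : ℝ) (f : ℝ → ℝ) (x : ℝ) : ℝ≥0∞ :=
  if x < t then
    ENNReal.ofReal (t ^ (-(2*a) - 2*b)) *
      ∫⁻ z in Set.Ioo (0 : ℝ) (t - x),
        ENNReal.ofReal ((t ^ 2 - (x - z) ^ 2) ^ (-a - 1/2) *
          (t ^ 2 - (x + z) ^ 2) ^ (a + b - 1/2) * z ^ (2*a + 1) * f z)
  else 0

noncomputable def V2 (a b t : ℝ) (f : ℝ → ℝ) (x : ℝ) : ℝ≥0∞ :=
  if x < t then
    ENNReal.ofReal (t ^ (-(2*a) - 2*b)) *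
      ∫⁻ z in Set.Ioo (0 : ℝ) (t - x),
        ENNReal.ofReal ((t ^ 2 - (x - z) ^ 2) ^ (b - 1) * z ^ (2*a + 1) * f z)
  else 0

noncomputable def V2t (a b t : ℝ) (f : ℝ → ℝ) (x : ℝ) : ℝ≥0∞ :=
  if x < t then
    ENNReal.ofReal (t ^ (-(2*a) - 2*b)) *
      ∫⁻ z in Set.Ioo (0 : ℝ) (t - x),
        ENNReal.ofReal ((t ^ 2 - (x - z) ^ 2) ^ (b - 1) *
          Real.log (2 * (t ^ 2 - (x - z) ^ 2) / (t ^ 2 - (x + z) ^ 2)) *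
          z ^ (2*a + 1) * f z)
  else 0

noncomputable def Vstar1 (a b : ℝ) (f : ℝ → ℝ) (x : ℝ) : ℝ≥0∞ :=
  ⨆ t ∈ Set.Ioi (0 : ℝ), V1 a b t f x

noncomputable def Vstar2 (a b : ℝ) (f : ℝ → ℝ) (x : ℝ) : ℝ≥0∞ :=
  ⨆ t ∈ Set.Ioi (0 : ℝ), V2 a b t f x

noncomputable def Vstar2t (a b : ℝ) (f : ℝ → ℝ) (x : ℝ) : ℝ≥0∞ :=
  ⨆ t ∈ Set.Ioi (0 : ℝ), V2t a b t f x

noncomputable def wNorm (p δ : ℝ) (g : ℝ → ℝ≥0∞) : ℝ≥0∞ :=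
  (∫⁻ x in Set.Ioi (0 : ℝ), g x ^ p * ENNReal.ofReal (x ^ δ)) ^ (1 / p)

noncomputable def wNormR (p δ : ℝ) (f : ℝ → ℝ) : ℝ≥0∞ :=
  wNorm p δ fun x => ENNReal.ofReal |f x|

/-!
All three operators integrate `z ^ (2a+1) f z` against a kernel that depends only on
`u = t² - (x-z)²` and `v = t² - (x+z)²` and is bounded below by a positive constant wherever
`v` stays away from `0`. Taking `t = 1` gives `S f x ≳ ∫₀^{1/4} z ^ (2a+1) f z` for `x < 1/2`,
and `t = 4` gives `S f x ≳ ∫₁² f` for `x < 1`.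

With `f = χ_(1,2)` the second bound makes `S f ≳ 1` on `(0, 1)`, which has finite weighted norm
only if `δ > -1`. With `f_ε z = z ^ ((ε - 1 - δ)/p) χ_(0,1)`, of norm `ε ^ (-1/p)`, the first
bound gives `S f_ε ≳ 1/ε` on `(0, 1/2)` as soon as `δ ≥ (2a+2)p - 1`; boundedness would then
force `1 ≲ ε ^ (1 - 1/p)` for all small `ε`.
-/

open Topology

lemma exists_pos_le_rpow_of_mem_Icc (e : ℝ) {l L : ℝ} (hl : 0 < l) :
    ∃ m > 0, ∀ r ∈ Icc l L, m ≤ r ^ e := by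
  refine ⟨min (l ^ e) (max l L ^ e), lt_min (by positivity)
    (Real.rpow_pos_of_pos (lt_max_of_lt_left hl) e), fun r ⟨hlr, hrL⟩ => ?_⟩
  rcases le_or_gt 0 e with he | he
  · exact (min_le_left _ _).trans (Real.rpow_le_rpow hl.le hlr he)
  · exact (min_le_right _ _).trans
      (Real.rpow_le_rpow_of_nonpos (hl.trans_le hlr) (hrL.trans (le_max_right l L)) he.le)

lemma lintegral_Ioo_rpow {e r : ℝ} (he : -1 < e) (hr : 0 < r) :
    ∫⁻ x in Ioo 0 r, ENNReal.ofReal (x ^ e) = ENNReal.ofReal (r ^ (e + 1) / (e + 1)) := by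
  rw [← ofReal_integral_eq_lintegral_ofReal
    ((intervalIntegral.integrableOn_Ioo_rpow_iff hr).mpr he)
    ((ae_restrict_mem measurableSet_Ioo).mono fun x hx => Real.rpow_nonneg hx.1.le e),
    ← integral_Ioc_eq_integral_Ioo, ← intervalIntegral.integral_of_le hr.le,
    integral_rpow (Or.inl he), Real.zero_rpow (by linarith), sub_zero]

lemma lintegral_Ioo_rpow_eq_top {e r : ℝ} (he : e ≤ -1) (hr : 0 < r) :
    ∫⁻ x in Ioo 0 r, ENNReal.ofReal (x ^ e) = ⊤ := by
  by_contra h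
  have hint : IntegrableOn (fun x : ℝ => x ^ e) (Ioo 0 r) :=
    ⟨by fun_prop, (hasFiniteIntegral_iff_ofReal ((ae_restrict_mem measurableSet_Ioo).mono
      fun x hx => Real.rpow_nonneg hx.1.le e)).mpr (lt_top_iff_ne_top.mpr h)⟩
  linarith [(intervalIntegral.integrableOn_Ioo_rpow_iff hr).mp hint]

lemma wNormR_indicator {p δ : ℝ} (hp : 0 < p) {s : Set ℝ} (hs : MeasurableSet s)
    (hs0 : s ⊆ Ioi 0) (g : ℝ → ℝ) :
    wNormR p δ (s.indicator g) =
      (∫⁻ x in s, ENNReal.ofReal |g x| ^ p * ENNReal.ofReal (x ^ δ)) ^ (1 / p) := by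
  have hind : (fun x => ENNReal.ofReal |s.indicator g x| ^ p * ENNReal.ofReal (x ^ δ)) =
      s.indicator fun x => ENNReal.ofReal |g x| ^ p * ENNReal.ofReal (x ^ δ) := by
    ext x
    by_cases hx : x ∈ s <;> simp [hx, hp]
  rw [wNormR, wNorm, hind, lintegral_indicator hs, Measure.restrict_restrict hs,
    inter_eq_left.mpr hs0]

lemma le_wNorm_of_le_on {p δ : ℝ} (hp : 0 < p) {s : Set ℝ} (hs : MeasurableSet s)
    (hs0 : s ⊆ Ioi 0) {g : ℝ → ℝ≥0∞} {c : ℝ≥0∞} (hg : ∀ x ∈ s, c ≤ g x) :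
    c * (∫⁻ x in s, ENNReal.ofReal (x ^ δ)) ^ (1 / p) ≤ wNorm p δ g := by
  have hint : c ^ p * ∫⁻ x in s, ENNReal.ofReal (x ^ δ) ≤
      ∫⁻ x in Ioi 0, g x ^ p * ENNReal.ofReal (x ^ δ) := calc
    _ = ∫⁻ x in s, c ^ p * ENNReal.ofReal (x ^ δ) :=
      (lintegral_const_mul _ (by fun_prop)).symm
    _ ≤ ∫⁻ x in s, g x ^ p * ENNReal.ofReal (x ^ δ) :=
      setLIntegral_mono' hs fun x hx => by gcongr; exact hg x hx
    _ ≤ _ := lintegral_mono_set hs0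
  calc c * (∫⁻ x in s, ENNReal.ofReal (x ^ δ)) ^ (1 / p)
      = (c ^ p * ∫⁻ x in s, ENNReal.ofReal (x ^ δ)) ^ (1 / p) := by
        rw [ENNReal.mul_rpow_of_nonneg _ _ (by positivity), ← ENNReal.rpow_mul,
          mul_one_div_cancel hp.ne', ENNReal.rpow_one]
    _ ≤ wNorm p δ g := ENNReal.rpow_le_rpow hint (by positivity)

lemma wNormR_indicator_Ioo_rpow {p δ ε : ℝ} (hp : 0 < p) (hε : 0 < ε) :
    wNormR p δ ((Ioo 0 1).indicator fun z => z ^ ((ε - 1 - δ) / p)) =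
      ENNReal.ofReal (1 / ε) ^ (1 / p) := by
  rw [wNormR_indicator hp measurableSet_Ioo fun x hx => hx.1]
  congr 1
  rw [setLIntegral_congr_fun measurableSet_Ioo (g := fun x => ENNReal.ofReal (x ^ (ε - 1)))
    fun x hx => ?_, lintegral_Ioo_rpow (by linarith) one_pos]
  · simp
  have hx0 := hx.1
  rw [abs_of_nonneg (by positivity), ENNReal.ofReal_rpow_of_nonneg (by positivity) hp.le,
    ← Real.rpow_mul hx0.le, ← ENNReal.ofReal_mul (by positivity), ← Real.rpow_add hx0]
  congr 2
  field_simp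
  ring

lemma ofReal_le_lintegral_rpow_mul_indicator {a p δ ε : ℝ} (hp : 0 < p) (hε : 0 < ε)
    (hεp : ε ≤ p) (hδ : (2*a + 2) * p - 1 ≤ δ) :
    ENNReal.ofReal (p / (4 * ε)) ≤ ∫⁻ z in Ioo 0 (1 / 4),
      ENNReal.ofReal (z ^ (2*a + 1) * (Ioo 0 1).indicator (fun z => z ^ ((ε - 1 - δ) / p)) z) := by
  have hexp : 2*a + 1 + (ε - 1 - δ) / p ≤ ε / p - 1 := by
    have : 2*a + 2 ≤ (1 + δ) / p := by rw [le_div_iff₀ hp]; linarith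
    have : (ε - 1 - δ) / p = ε / p - (1 + δ) / p := by ring
    linarith
  calc ENNReal.ofReal (p / (4 * ε))
      ≤ ENNReal.ofReal ((1 / 4) ^ (ε / p - 1 + 1) / (ε / p - 1 + 1)) := by
        refine ENNReal.ofReal_le_ofReal ?_
        have hquarter : (1 / 4 : ℝ) ≤ (1 / 4) ^ (ε / p) := by
          simpa using Real.rpow_le_rpow_of_exponent_ge (by norm_num : (0 : ℝ) < 1 / 4)
            (by norm_num) (div_le_one_of_le₀ hεp hp.le)
        rw [sub_add_cancel]
        calc p / (4 * ε) = (1 / 4) / (ε / p) := by field_simp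
          _ ≤ _ := by gcongr
    _ = ∫⁻ z in Ioo 0 (1 / 4), ENNReal.ofReal (z ^ (ε / p - 1)) :=
        (lintegral_Ioo_rpow (by linarith [div_pos hε hp]) (by norm_num)).symm
    _ ≤ _ := setLIntegral_mono' measurableSet_Ioo fun z ⟨hz0, hz⟩ => by
        rw [indicator_of_mem (show z ∈ Ioo (0 : ℝ) 1 from ⟨hz0, by linarith⟩),
          ← Real.rpow_add hz0]
        exact ENNReal.ofReal_le_ofReal
          (Real.rpow_le_rpow_of_exponent_ge hz0 (by linarith) hexp)

/-- The common shape of `V1`, `V2` and `V2t`, whose kernels are functions of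
`u = t² - (x-z)²` and `v = t² - (x+z)²`. -/
noncomputable def kernelOp (a c : ℝ) (κ : ℝ → ℝ → ℝ) (t : ℝ) (f : ℝ → ℝ) (x : ℝ) : ℝ≥0∞ :=
  if x < t then
    ENNReal.ofReal (t ^ c) * ∫⁻ z in Ioo 0 (t - x),
      ENNReal.ofReal (κ (t ^ 2 - (x - z) ^ 2) (t ^ 2 - (x + z) ^ 2) * z ^ (2*a + 1) * f z)
  else 0

noncomputable def maxKernelOp (a c : ℝ) (κ : ℝ → ℝ → ℝ) (f : ℝ → ℝ) (x : ℝ) : ℝ≥0∞ :=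
  ⨆ t ∈ Ioi (0 : ℝ), kernelOp a c κ t f x

def KernelBoundedBelow (κ : ℝ → ℝ → ℝ) : Prop :=
  ∀ l L : ℝ, 0 < l → ∃ m > 0, ∀ u v, l ≤ v → v ≤ u → u ≤ L → m ≤ κ u v

lemma le_kernelOp {a c m t x : ℝ} {κ : ℝ → ℝ → ℝ} {f : ℝ → ℝ} {s : Set ℝ} (ht : 0 < t)
    (hxt : x < t) (hm : 0 ≤ m) (hs : MeasurableSet s) (hst : s ⊆ Ioo 0 (t - x))
    (hκ : ∀ z ∈ s, m ≤ κ (t ^ 2 - (x - z) ^ 2) (t ^ 2 - (x + z) ^ 2)) (hf : ∀ z, 0 ≤ f z) :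
    ENNReal.ofReal (t ^ c * m) * ∫⁻ z in s, ENNReal.ofReal (z ^ (2*a + 1) * f z) ≤
      kernelOp a c κ t f x := by
  rw [kernelOp, if_pos hxt, ENNReal.ofReal_mul (by positivity), mul_assoc,
    ← lintegral_const_mul' _ _ ENNReal.ofReal_ne_top]
  refine mul_le_mul_right ((setLIntegral_mono' hs fun z hz => ?_).trans
    (lintegral_mono_set hst)) _
  rw [← ENNReal.ofReal_mul hm, mul_assoc (κ _ _)]
  have hw : 0 ≤ z ^ (2*a + 1) * f z := mul_nonneg (Real.rpow_nonneg (hst hz).1.le _) (hf z)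
  exact ENNReal.ofReal_le_ofReal (mul_le_mul_of_nonneg_right (hκ z hz) hw)

namespace KernelBoundedBelow

variable {κ : ℝ → ℝ → ℝ}

lemma exists_pos_le (hκ : KernelBoundedBelow κ) :
    ∃ m > 0, ∀ t x z : ℝ, 1 ≤ t → t ≤ 4 → 0 < x → 0 < z → x + z ≤ 3 / 4 * t →
      m ≤ κ (t ^ 2 - (x - z) ^ 2) (t ^ 2 - (x + z) ^ 2) := by
  obtain ⟨m, hm, hmκ⟩ := hκ (7 / 16) 16 (by norm_num)
  exact ⟨m, hm, fun t x z ht1 ht4 hx hz hxz =>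
    hmκ _ _ (by nlinarith) (by nlinarith) (by nlinarith)⟩

lemma exists_le_maxKernelOp_near_zero (hκ : KernelBoundedBelow κ) (a c : ℝ) :
    ∃ C > 0, ∀ f : ℝ → ℝ, (∀ z, 0 ≤ f z) → ∀ x ∈ Ioo (0 : ℝ) (1 / 2),
      ENNReal.ofReal C * ∫⁻ z in Ioo 0 (1 / 4), ENNReal.ofReal (z ^ (2*a + 1) * f z) ≤
        maxKernelOp a c κ f x := by
  obtain ⟨m, hm, hmκ⟩ := hκ.exists_pos_le
  refine ⟨1 ^ c * m, by positivity, fun f hf x ⟨hx0, hx⟩ => ?_⟩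
  refine le_trans ?_ (le_iSup₂ (f := fun t _ => kernelOp a c κ t f x) 1 (mem_Ioi.mpr one_pos))
  exact le_kernelOp one_pos (by linarith) hm.le measurableSet_Ioo
    (Ioo_subset_Ioo_right (by linarith))
    (fun z ⟨hz0, hz⟩ => hmκ 1 x z le_rfl (by norm_num) hx0 hz0 (by linarith)) hf

lemma exists_le_maxKernelOp_far (hκ : KernelBoundedBelow κ) (a c : ℝ) :
    ∃ C > 0, ∀ f : ℝ → ℝ, (∀ z, 0 ≤ f z) → ∀ x ∈ Ioo (0 : ℝ) 1,
      ENNReal.ofReal C * ∫⁻ z in Ioo 1 2, ENNReal.ofReal (f z) ≤ maxKernelOp a c κ f x := by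
  obtain ⟨m, hm, hmκ⟩ := hκ.exists_pos_le
  obtain ⟨m', hm', hm'z⟩ := exists_pos_le_rpow_of_mem_Icc (2*a + 1) one_pos (L := 2)
  refine ⟨4 ^ c * m * m', by positivity, fun f hf x ⟨hx0, hx⟩ => ?_⟩
  calc ENNReal.ofReal (4 ^ c * m * m') * ∫⁻ z in Ioo 1 2, ENNReal.ofReal (f z)
      = ENNReal.ofReal (4 ^ c * m) * ∫⁻ z in Ioo 1 2, ENNReal.ofReal (m' * f z) := by
        simp_rw [ENNReal.ofReal_mul' hm'.le, ENNReal.ofReal_mul hm'.le]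
        rw [lintegral_const_mul' _ _ ENNReal.ofReal_ne_top, mul_assoc]
    _ ≤ ENNReal.ofReal (4 ^ c * m) *
          ∫⁻ z in Ioo 1 2, ENNReal.ofReal (z ^ (2*a + 1) * f z) := by
        refine mul_le_mul_right (setLIntegral_mono' measurableSet_Ioo fun z hz => ?_) _
        exact ENNReal.ofReal_le_ofReal
          (mul_le_mul_of_nonneg_right (hm'z z (Ioo_subset_Icc_self hz)) (hf z))
    _ ≤ kernelOp a c κ 4 f x :=
        le_kernelOp (by norm_num) (by linarith) hm.le measurableSet_Ioo
          (fun z ⟨hz1, hz2⟩ => ⟨by linarith, by linarith⟩)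
          (fun z ⟨hz1, hz2⟩ => hmκ 4 x z (by norm_num) le_rfl hx0 (by linarith) (by linarith))
          hf
    _ ≤ maxKernelOp a c κ f x :=
        le_iSup₂ (f := fun t _ => kernelOp a c κ t f x) 4 (by norm_num : (0 : ℝ) < 4)

end KernelBoundedBelow

lemma kernelBoundedBelow_V1 (a b : ℝ) :
    KernelBoundedBelow fun u v => u ^ (-a - 1/2) * v ^ (a + b - 1/2) := by
  intro l L hl
  obtain ⟨m₁, hm₁, h₁⟩ := exists_pos_le_rpow_of_mem_Icc (-a - 1/2) hl (L := L)
  obtain ⟨m₂, hm₂, h₂⟩ := exists_pos_le_rpow_of_mem_Icc (a + b - 1/2) hl (L := L)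
  refine ⟨m₁ * m₂, by positivity, fun u v hv hvu hu => ?_⟩
  exact mul_le_mul (h₁ u ⟨hv.trans hvu, hu⟩) (h₂ v ⟨hv, hvu.trans hu⟩) hm₂.le
    (hm₁.le.trans (h₁ u ⟨hv.trans hvu, hu⟩))

lemma kernelBoundedBelow_V2 (b : ℝ) : KernelBoundedBelow fun u _ => u ^ (b - 1) := by
  intro l L hl
  obtain ⟨m, hm, h⟩ := exists_pos_le_rpow_of_mem_Icc (b - 1) hl (L := L)
  exact ⟨m, hm, fun u v hv hvu hu => h u ⟨hv.trans hvu, hu⟩⟩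

lemma kernelBoundedBelow_V2t (b : ℝ) :
    KernelBoundedBelow fun u v => u ^ (b - 1) * Real.log (2 * u / v) := by
  intro l L hl
  obtain ⟨m, hm, h⟩ := exists_pos_le_rpow_of_mem_Icc (b - 1) hl (L := L)
  refine ⟨m * Real.log 2, mul_pos hm (Real.log_pos one_lt_two), fun u v hv hvu hu => ?_⟩
  have hlog : Real.log 2 ≤ Real.log (2 * u / v) :=
    Real.log_le_log two_pos (by rw [le_div_iff₀ (hl.trans_le hv)]; linarith)
  exact mul_le_mul (h u ⟨hv.trans hvu, hu⟩) hlog (Real.log_pos one_lt_two).le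
    (hm.le.trans (h u ⟨hv.trans hvu, hu⟩))

lemma exists_kernelBoundedBelow_of_Vstar {a b : ℝ} {S : (ℝ → ℝ) → ℝ → ℝ≥0∞}
    (hS : S = Vstar1 a b ∨ S = Vstar2 a b ∨ S = Vstar2t a b) :
    ∃ κ, KernelBoundedBelow κ ∧ S = maxKernelOp a (-(2*a) - 2*b) κ := by
  rcases hS with rfl | rfl | rfl
  exacts [⟨_, kernelBoundedBelow_V1 a b, rfl⟩, ⟨_, kernelBoundedBelow_V2 b, rfl⟩,
    ⟨_, kernelBoundedBelow_V2t b, rfl⟩]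

section NecessaryConditions

variable {p δ : ℝ} {S : (ℝ → ℝ) → ℝ → ℝ≥0∞} {C : ℝ≥0}

lemma neg_one_lt_of_far_lower_bound (hp : 0 < p) {c : ℝ} (hc : 0 < c)
    (hS : ∀ f : ℝ → ℝ, (∀ z, 0 ≤ f z) → ∀ x ∈ Ioo (0 : ℝ) 1,
      ENNReal.ofReal c * ∫⁻ z in Ioo 1 2, ENNReal.ofReal (f z) ≤ S f x)
    (hbd : ∀ f : ℝ → ℝ, Measurable f → (∀ z, 0 ≤ f z) → wNorm p δ (S f) ≤ C * wNormR p δ f) :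
    -1 < δ := by
  by_contra! hδ
  set f : ℝ → ℝ := (Ioo 1 2).indicator 1
  have hf_meas : Measurable f := measurable_one.indicator measurableSet_Ioo
  have hf_nonneg : ∀ z, 0 ≤ f z := indicator_nonneg fun _ _ => zero_le_one
  have hf_norm : wNormR p δ f < ⊤ := by
    rw [wNormR_indicator hp measurableSet_Ioo fun x hx => one_pos.trans hx.1]
    simp only [Pi.one_apply, abs_one, ENNReal.ofReal_one, ENNReal.one_rpow, one_mul]
    refine ENNReal.rpow_lt_top_of_nonneg (by positivity) ?_
    have hcont : ContinuousOn (fun x : ℝ => x ^ δ) (Icc 1 2) :=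
      continuousOn_id.rpow_const fun x hx => Or.inl (zero_lt_one.trans_le hx.1).ne'
    exact (hcont.integrableOn_Icc.mono_set Ioo_subset_Icc_self).lintegral_lt_top.ne
  have hf_int : ∫⁻ z in Ioo 1 2, ENNReal.ofReal (f z) = 1 := by
    rw [setLIntegral_congr_fun measurableSet_Ioo (g := fun _ => 1) fun z hz => by
      simp [f, indicator_of_mem hz]]
    simp [Real.volume_Ioo, show (2 : ℝ) - 1 = 1 by norm_num]
  have hSf : ∀ x ∈ Ioo (0 : ℝ) 1, ENNReal.ofReal c ≤ S f x := fun x hx => by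
    simpa [hf_int] using hS f hf_nonneg x hx
  have hSf_norm : wNorm p δ (S f) = ⊤ := by
    have := le_wNorm_of_le_on (δ := δ) hp measurableSet_Ioo (fun x hx => hx.1) hSf
    rwa [lintegral_Ioo_rpow_eq_top hδ one_pos, ENNReal.top_rpow_of_pos (by positivity),
      ENNReal.mul_top (by simpa using hc), top_le_iff] at this
  have := hbd f hf_meas hf_nonneg
  rw [hSf_norm, top_le_iff] at this
  exact (ENNReal.mul_lt_top ENNReal.coe_lt_top hf_norm).ne this

lemma le_mul_rpow_of_near_zero_lower_bound (hp : 1 < p) {a c J ε : ℝ}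
    (hδ : (2*a + 2) * p - 1 ≤ δ) (hc : 0 < c)
    (hS : ∀ f : ℝ → ℝ, (∀ z, 0 ≤ f z) → ∀ x ∈ Ioo (0 : ℝ) (1 / 2),
      ENNReal.ofReal c * ∫⁻ z in Ioo 0 (1 / 4), ENNReal.ofReal (z ^ (2*a + 1) * f z) ≤ S f x)
    (hbd : ∀ f : ℝ → ℝ, Measurable f → (∀ z, 0 ≤ f z) → wNorm p δ (S f) ≤ C * wNormR p δ f)
    (hJ0 : 0 ≤ J) (hJ : ∫⁻ x in Ioo 0 (1 / 2), ENNReal.ofReal (x ^ δ) = ENNReal.ofReal J)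
    (hε : 0 < ε) (hε1 : ε ≤ 1) :
    c * p / 4 * J ^ (1 / p) ≤ C * ε ^ (1 - 1 / p) := by
  have hp0 : 0 < p := by linarith
  set f := (Ioo (0 : ℝ) 1).indicator fun z => z ^ ((ε - 1 - δ) / p)
  have hf_meas : Measurable f :=
    (by fun_prop : Measurable fun z : ℝ => z ^ ((ε - 1 - δ) / p)).indicator measurableSet_Ioo
  have hf_nonneg : ∀ z, 0 ≤ f z := indicator_nonneg fun z hz => Real.rpow_nonneg hz.1.le _
  have hSf : ∀ x ∈ Ioo (0 : ℝ) (1 / 2), ENNReal.ofReal (c * (p / (4 * ε))) ≤ S f x :=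
    fun x hx => calc
      _ = ENNReal.ofReal c * ENNReal.ofReal (p / (4 * ε)) := ENNReal.ofReal_mul hc.le
      _ ≤ ENNReal.ofReal c * ∫⁻ z in Ioo 0 (1 / 4), ENNReal.ofReal (z ^ (2*a + 1) * f z) := by
        gcongr
        exact ofReal_le_lintegral_rpow_mul_indicator hp0 hε (by linarith) hδ
      _ ≤ S f x := hS f hf_nonneg x hx
  have hest := (le_wNorm_of_le_on hp0 measurableSet_Ioo (fun x hx => hx.1) hSf).trans
    (hbd f hf_meas hf_nonneg)
  rw [hJ, wNormR_indicator_Ioo_rpow hp0 hε, ENNReal.ofReal_rpow_of_nonneg hJ0 (by positivity),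
    ENNReal.ofReal_rpow_of_nonneg (by positivity) (by positivity),
    ← ENNReal.ofReal_mul (by positivity), ← ENNReal.ofReal_coe_nnreal,
    ← ENNReal.ofReal_mul C.coe_nonneg, ENNReal.ofReal_le_ofReal_iff (by positivity)] at hest
  calc c * p / 4 * J ^ (1 / p) = ε * (c * (p / (4 * ε)) * J ^ (1 / p)) := by field_simp
    _ ≤ ε * (C * (1 / ε) ^ (1 / p)) := by gcongr
    _ = C * ε ^ (1 - 1 / p) := by
      rw [Real.rpow_sub hε, Real.rpow_one, Real.div_rpow zero_le_one hε.le, Real.one_rpow]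
      field_simp

lemma lt_of_near_zero_lower_bound (hp : 1 < p) (hδ : -1 < δ) {a c : ℝ} (hc : 0 < c)
    (hS : ∀ f : ℝ → ℝ, (∀ z, 0 ≤ f z) → ∀ x ∈ Ioo (0 : ℝ) (1 / 2),
      ENNReal.ofReal c * ∫⁻ z in Ioo 0 (1 / 4), ENNReal.ofReal (z ^ (2*a + 1) * f z) ≤ S f x)
    (hbd : ∀ f : ℝ → ℝ, Measurable f → (∀ z, 0 ≤ f z) → wNorm p δ (S f) ≤ C * wNormR p δ f) :
    δ < (2*a + 2) * p - 1 := by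
  by_contra! hδa
  have hJ0 : 0 < (1 / 2 : ℝ) ^ (δ + 1) / (δ + 1) := div_pos (by positivity) (by linarith)
  have hq : 0 < 1 - 1 / p := by rw [sub_pos, div_lt_one (by linarith)]; exact hp
  have hlim : Tendsto (fun ε : ℝ => (C : ℝ) * ε ^ (1 - 1 / p)) (𝓝[>] 0) (𝓝 0) := by
    have := ((Real.continuousAt_rpow_const 0 _ (Or.inr hq.le)).tendsto.const_mul
      (C : ℝ)).mono_left (nhdsWithin_le_nhds (s := Ioi 0))
    rwa [Real.zero_rpow hq.ne', mul_zero] at this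
  have hle := ge_of_tendsto hlim <| eventually_of_mem (Ioc_mem_nhdsGT one_pos) fun ε hε =>
    le_mul_rpow_of_near_zero_lower_bound hp hδa hc hS hbd hJ0.le
      (lintegral_Ioo_rpow hδ (by norm_num)) hε.1 hε.2
  have : 0 < c * p / 4 * ((1 / 2 : ℝ) ^ (δ + 1) / (δ + 1)) ^ (1 / p) := by
    have := hJ0; positivity
  linarith

end NecessaryConditions

theorem necessary_conditions_V_general (a b p δ : ℝ)
    (hp : 1 < p) (S : (ℝ → ℝ) → ℝ → ℝ≥0∞)
    (hS : S = Vstar1 a b ∨ S = Vstar2 a b ∨ S = Vstar2t a b)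
    (hbd : ∃ C : ℝ≥0, ∀ f : ℝ → ℝ, Measurable f → (∀ z, 0 ≤ f z) →
      wNorm p δ (S f) ≤ C * wNormR p δ f) :
    δ < (2*a + 2) * p - 1 ∧ -1 < δ := by
  obtain ⟨C, hC⟩ := hbd
  obtain ⟨κ, hκ, rfl⟩ := exists_kernelBoundedBelow_of_Vstar hS
  obtain ⟨c₁, hc₁, hnear⟩ := hκ.exists_le_maxKernelOp_near_zero a (-(2*a) - 2*b)
  obtain ⟨c₂, hc₂, hfar⟩ := hκ.exists_le_maxKernelOp_far a (-(2*a) - 2*b)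
  have hδ : -1 < δ := neg_one_lt_of_far_lower_bound (by linarith) hc₂ hfar hC
  exact ⟨lt_of_near_zero_lower_bound hp hδ hc₁ hnear hC, hδ⟩

/-- necessary conditions for the V-type maximal operators. -/
theorem necessary_conditions_V (a b p δ : ℝ) (ha : -1 < a) (hab : -(1/2) < a + b)
    (hp : 1 < p) (S : (ℝ → ℝ) → ℝ → ℝ≥0∞)
    (hS : S = Vstar1 a b ∨ S = Vstar2 a b ∨ S = Vstar2t a b)
    (hwd : ∀ f : ℝ → ℝ, Measurable f → (∀ z, 0 ≤ f z) → wNormR p δ f < ⊤ →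
      ∀ᵐ x ∂(volume.restrict (Set.Ioi (0 : ℝ))), S f x < ⊤)
    (hbd : ∃ C : ℝ≥0, ∀ f : ℝ → ℝ, Measurable f → (∀ z, 0 ≤ f z) →
      wNorm p δ (S f) ≤ C * wNormR p δ f) :
    δ < (2*a + 2) * p - 1 ∧ -1 < δ :=
  necessary_conditions_V_general a b p δ hp S hS hbd
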